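/- For every integer n ≥ 1, the endomorphism algebra of the n-th tensor power of the standard representation of the dicyclic group of degree n satisfies dim_ℂ End_{Dic_n}(V^{⊗n}) = (1/2)·binomial(2n,n) + 1. -/

import Mathlib

open scoped TensorProduct
open Matrix

noncomputable section

/-- `ℂ²`, the standard two-dimensional complex vector space. -/
abbrev V2 : Type := Fin 2 → ℂ

/-- The standard representation of a subgroup `G ≤ GL₂(ℂ)` on `ℂ²`, by matrix-vector
multiplication. -/
def stdRep (G : Subgroup (GL (Fin 2) ℂ)) : Representation ℂ G V2 where
  toFun g := Matrix.toLin' ((g : GL (Fin 2) ℂ) : Matrix (Fin 2) (Fin 2) ℂ)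
  map_one' := by
    simp only [OneMemClass.coe_one, Units.val_one, Matrix.toLin'_one]
    rfl
  map_mul' g h := by
    simp only [MulMemClass.coe_mul, Units.val_mul, Matrix.toLin'_mul]
    rfl

/-- `TPow j` is the `(j+1)`-st tensor power `V^{⊗(j+1)}` of `V = ℂ²`, realized as an
iterated binary tensor product (bundled as an object of `ModuleCat ℂ` so that the
recursion carries its module structure). -/
def TPow : ℕ → ModuleCat ℂ
  | 0 => ModuleCat.of ℂ V2
  | (j + 1) => ModuleCat.of ℂ (TPow j ⊗[ℂ] V2)

/-- The diagonal representation of `G ≤ GL₂(ℂ)` on `TPow j = V^{⊗(j+1)}`. -/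
def TPowRep (G : Subgroup (GL (Fin 2) ℂ)) : (j : ℕ) → Representation ℂ G (TPow j)
  | 0 => stdRep G
  | (j + 1) => (TPowRep G j).tprod (stdRep G)

/-- The basis vector `v_s^{⊗(j+1)}` of `TPow j = V^{⊗(j+1)}`, for `s : Fin 2`. -/
def vpow (s : Fin 2) : (j : ℕ) → TPow j
  | 0 => Pi.single s 1
  | (j + 1) => vpow s j ⊗ₜ[ℂ] Pi.single s 1

/-- The subspace `V_{j+1}` of `V^{⊗(j+1)}` spanned by `v₁^{⊗(j+1)}` and `v₂^{⊗(j+1)}`. -/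
def Vsub (j : ℕ) : Submodule ℂ (TPow j) := Submodule.span ℂ {vpow 0 j, vpow 1 j}

/-- The space `End_G(W)` of `G`-equivariant linear endomorphisms of a representation `W`. -/
def equivEnd {G W : Type*} [Group G] [AddCommGroup W] [Module ℂ W]
    (ρ : Representation ℂ G W) : Submodule ℂ (W →ₗ[ℂ] W) where
  carrier := {f | ∀ g : G, f ∘ₗ ρ g = ρ g ∘ₗ f}
  add_mem' := by
    intro f h hf hh g
    simp only [LinearMap.add_comp, LinearMap.comp_add, hf g, hh g]
  zero_mem' := by
    intro g
    simp only [LinearMap.zero_comp, LinearMap.comp_zero]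
  smul_mem' := by
    intro c f hf g
    simp only [LinearMap.smul_comp, LinearMap.comp_smul, hf g]

/-!
Rescale the standard basis of `ℂ²` to `(e₀, I e₁)` and take tensor products, indexing the
basis of `V^{⊗n}` by words `s ∈ {0,1}ⁿ` with weight `|s|` (the number of ones). Then
`a = diag(α, α⁻¹)` acts diagonally with eigenvalue `α ^ (n - 2|s|)`, and `x` acts as `(-I)ⁿ`
times the permutation `s ↦ s̄` complementing every letter. As `α = exp(πi/n)` is a primitive
`2n`-th root of unity, a matrix commutes with `a` iff it is supported on the pairs `(s, t)`
with `|s| = |t|` or `{|s|, |t|} = {0, n}`; there are `∑ₖ C(n,k)² + 2 = C(2n,n) + 2` of them.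
It commutes with `x` iff it is invariant under `(s, t) ↦ (s̄, t̄)`, a fixed-point-free
involution of that support, so `End_G(V^{⊗n})` has half that dimension.
-/

section Commutant

variable {W : Type*} [AddCommGroup W] [Module ℂ W]

lemma mem_equivEnd_iff_of_closure_eq_top {G : Type*} [Group G] (ρ : Representation ℂ G W)
    {S : Set G} (hS : Subgroup.closure S = ⊤) (f : Module.End ℂ W) :
    f ∈ equivEnd ρ ↔ ∀ g ∈ S, Commute f (ρ g) := by
  refine ⟨fun hf g _ => hf g, fun h g => ?_⟩
  show Commute f (ρ g)
  have hg : g ∈ Subgroup.closure S := hS ▸ Subgroup.mem_top g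
  induction hg using Subgroup.closure_induction with
  | mem x hx => exact h x hx
  | one => simpa only [map_one] using Commute.one_right f
  | mul x y _ _ hx hy => simpa only [map_mul] using hx.mul_right hy
  | inv x _ hx =>
    have := hx.units_inv_right (u := ρ.toHomUnits x)
    rwa [← map_inv, MonoidHom.coe_toHomUnits] at this

lemma mem_equivEnd_closure_iff {H : Type*} [Group H] {S : Set H}
    (ρ : Representation ℂ (Subgroup.closure S) W) (f : Module.End ℂ W) :
    f ∈ equivEnd ρ ↔ ∀ g : Subgroup.closure S, (g : H) ∈ S → Commute f (ρ g) :=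
  mem_equivEnd_iff_of_closure_eq_top ρ Subgroup.closure_closure_coe_preimage f

end Commutant

section MatrixCommute

variable {K ι W : Type*} [Field K] [Fintype ι] [DecidableEq ι] [AddCommGroup W] [Module K W]
  (b : Module.Basis ι K W)

lemma commute_iff_of_apply_basis_eq_smul {d : ι → K} {g : Module.End K W}
    (hg : ∀ i, g (b i) = d i • b i) (f : Module.End K W) :
    Commute f g ↔ ∀ i j, d i ≠ d j → LinearMap.toMatrix b b f i j = 0 := by
  have hg_mat : LinearMap.toMatrix b b g = Matrix.diagonal d := by
    ext i j
    by_cases h : i = j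
    · subst h; simp [LinearMap.toMatrix_apply, hg]
    · simp [LinearMap.toMatrix_apply, hg, h]
  rw [Commute, SemiconjBy, ← (LinearMap.toMatrix b b).injective.eq_iff, LinearMap.toMatrix_mul,
    LinearMap.toMatrix_mul, hg_mat, ← Matrix.ext_iff]
  refine forall₂_congr fun i j => ?_
  rw [Matrix.mul_diagonal, Matrix.diagonal_mul, mul_comm, ← sub_eq_zero, ← sub_mul, mul_eq_zero,
    sub_eq_zero, or_iff_not_imp_left, eq_comm]

lemma commute_iff_of_apply_basis_eq_smul_involutive {c : K} (hc : c ≠ 0) {σ : ι → ι}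
    (hσ : Function.Involutive σ) {g : Module.End K W} (hg : ∀ i, g (b i) = c • b (σ i))
    (f : Module.End K W) :
    Commute f g ↔
      ∀ i j, LinearMap.toMatrix b b f (σ i) (σ j) = LinearMap.toMatrix b b f i j := by
  have hg_mat : LinearMap.toMatrix b b g = Matrix.of fun i j => if i = σ j then c else 0 := by
    ext i j
    simp [LinearMap.toMatrix_apply, hg, Finsupp.single_apply, eq_comm]
  have hfg (i j : ι) : (LinearMap.toMatrix b b f * LinearMap.toMatrix b b g) i j =
      LinearMap.toMatrix b b f i (σ j) * c := by
    simp [Matrix.mul_apply, hg_mat]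
  have hgf (i j : ι) : (LinearMap.toMatrix b b g * LinearMap.toMatrix b b f) i j =
      c * LinearMap.toMatrix b b f (σ i) j := by
    have hσ_eq (k : ι) : i = σ k ↔ k = σ i :=
      ⟨fun h => h ▸ (hσ k).symm, fun h => h ▸ (hσ i).symm⟩
    simp [Matrix.mul_apply, hg_mat, hσ_eq]
  rw [Commute, SemiconjBy, ← (LinearMap.toMatrix b b).injective.eq_iff, LinearMap.toMatrix_mul,
    LinearMap.toMatrix_mul, ← Matrix.ext_iff]
  simp only [hfg, hgf, mul_comm _ c, mul_right_inj' hc]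
  exact ⟨fun h i j => by simpa [hσ i] using h (σ i) j,
    fun h i j => by simpa [hσ i] using h (σ i) j⟩

end MatrixCommute

section InvariantsOn

variable {κ : Type*}

def invariantsOn (K : Type*) [Field K] (σ : κ → κ) (Q : Finset κ) :
    Submodule K (κ → K) where
  carrier := {v | (∀ p ∉ Q, v p = 0) ∧ ∀ p, v (σ p) = v p}
  add_mem' hu hv :=
    ⟨fun p hp => by simp [hu.1 p hp, hv.1 p hp], fun p => by simp [hu.2 p, hv.2 p]⟩
  zero_mem' := ⟨fun _ _ => rfl, fun _ => rfl⟩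
  smul_mem' c _ hv := ⟨fun p hp => by simp [hv.1 p hp], fun p => by simp [hv.2 p]⟩

@[simp]
lemma mem_invariantsOn {K : Type*} [Field K] {σ : κ → κ} {Q : Finset κ} {v : κ → K} :
    v ∈ invariantsOn K σ Q ↔ (∀ p ∉ Q, v p = 0) ∧ ∀ p, v (σ p) = v p :=
  Iff.rfl

variable (K : Type*) [Field K] {σ : κ → κ} {Q R : Finset κ}

lemma exists_fundamentalDomain (hσ : Function.Involutive σ) (hfree : ∀ p, σ p ≠ p)
    (hQ : ∀ p ∈ Q, σ p ∈ Q) :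
    ∃ R ⊆ Q, ∀ p ∈ Q, p ∈ R ↔ σ p ∉ R := by
  classical
  let : LinearOrder κ := IsWellOrder.linearOrder WellOrderingRel
  refine ⟨Q.filter fun p => p < σ p, Finset.filter_subset _ _, fun p hp => ?_⟩
  simp only [Finset.mem_filter, hp, true_and, hσ p, not_lt, hQ p hp]
  exact ⟨le_of_lt, fun h => lt_of_le_of_ne h (hfree p).symm⟩

lemma card_eq_two_mul_card_of_fundamentalDomain (hσ : Function.Involutive σ)
    (hQ : ∀ p ∈ Q, σ p ∈ Q) (hRQ : R ⊆ Q) (hR : ∀ p ∈ Q, p ∈ R ↔ σ p ∉ R) :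
    Q.card = 2 * R.card := by
  classical
  have : (Q \ R).card = R.card :=
    Finset.card_nbij' σ σ
      (fun p hp => by
        obtain ⟨hpQ, hpR⟩ := Finset.mem_sdiff.1 hp
        exact not_not.1 (mt (hR p hpQ).2 hpR))
      (fun p hp => Finset.mem_sdiff.2 ⟨hQ p (hRQ hp), (hR p (hRQ hp)).1 hp⟩)
      (fun p _ => hσ p) (fun p _ => hσ p)
  rw [← Finset.card_sdiff_add_card_eq_card hRQ, this, two_mul]

lemma finrank_invariantsOn_of_fundamentalDomain (hσ : Function.Involutive σ)
    (hQ : ∀ p ∈ Q, σ p ∈ Q) (hRQ : R ⊆ Q) (hR : ∀ p ∈ Q, p ∈ R ↔ σ p ∉ R) :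
    Module.finrank K (invariantsOn K σ Q) = R.card := by
  classical
  let restrict : invariantsOn K σ Q →ₗ[K] (R → K) :=
    { toFun := fun v r => (v : κ → K) r
      map_add' := fun _ _ => rfl
      map_smul' := fun _ _ => rfl }
  let extend (u : R → K) (p : κ) : K := if h : p ∈ R then u ⟨p, h⟩ else 0
  have hinj : Function.Injective restrict := by
    rw [← LinearMap.ker_eq_bot, LinearMap.ker_eq_bot']
    rintro ⟨v, hvQ, hvσ⟩ hv
    ext p
    show v p = 0
    by_cases hpQ : p ∈ Q
    · by_cases hpR : p ∈ R
      · exact congrFun hv ⟨p, hpR⟩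
      · rw [← hvσ p]
        exact congrFun hv ⟨σ p, not_not.1 (mt (hR p hpQ).2 hpR)⟩
    · exact hvQ p hpQ
  have hsurj : Function.Surjective restrict := by
    intro u
    refine ⟨⟨fun p => extend u p + extend u (σ p), fun p hp => ?_, fun p => ?_⟩, ?_⟩
    · have hσp : σ p ∉ R := fun h => hp (hσ p ▸ hQ _ (hRQ h))
      have hpR : p ∉ R := fun h => hp (hRQ h)
      simp [extend, hσp, hpR]
    · simp only [hσ p, add_comm]
    · ext r
      simp [restrict, extend, (hR r (hRQ r.2)).1 r.2]
  rw [(LinearEquiv.ofBijective restrict ⟨hinj, hsurj⟩).finrank_eq,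
    Module.finrank_fintype_fun_eq_card, Fintype.card_coe]

theorem two_mul_finrank_invariantsOn (hσ : Function.Involutive σ) (hfree : ∀ p, σ p ≠ p)
    (hQ : ∀ p ∈ Q, σ p ∈ Q) :
    2 * Module.finrank K (invariantsOn K σ Q) = Q.card := by
  obtain ⟨R, hRQ, hR⟩ := exists_fundamentalDomain hσ hfree hQ
  rw [finrank_invariantsOn_of_fundamentalDomain K hσ hQ hRQ hR,
    card_eq_two_mul_card_of_fundamentalDomain hσ hQ hRQ hR]

end InvariantsOn

lemma isPrimitiveRoot_exp_pi_mul_I_div (n : ℕ) (hn : n ≠ 0) :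
    IsPrimitiveRoot (Complex.exp (Real.pi * Complex.I / n)) (2 * n) := by
  convert Complex.isPrimitiveRoot_exp (2 * n) (by omega) using 2
  push_cast
  field_simp

lemma Representation.tprod_apply_basis_tensorProduct {K G W W' ι ι' : Type*} [CommSemiring K]
    [Monoid G] [AddCommMonoid W] [AddCommMonoid W'] [Module K W] [Module K W']
    {ρ : Representation K G W} {ρ' : Representation K G W'} {b : Module.Basis ι K W}
    {b' : Module.Basis ι' K W'} {g : G} {σ : ι → ι} {σ' : ι' → ι'} {c : ι → K}
    {c' : ι' → K} (h : ∀ i, ρ g (b i) = c i • b (σ i))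
    (h' : ∀ i, ρ' g (b' i) = c' i • b' (σ' i)) (p : ι × ι') :
    ρ.tprod ρ' g (b.tensorProduct b' p) =
      (c p.1 * c' p.2) • b.tensorProduct b' (Prod.map σ σ' p) := by
  rw [Representation.tprod_apply, Module.Basis.tensorProduct_apply',
    Module.Basis.tensorProduct_apply', TensorProduct.map_tmul, h, h', TensorProduct.smul_tmul_smul]
  rfl

namespace TPow

def Index : ℕ → Type
  | 0 => Fin 2
  | j + 1 => Index j × Fin 2

instance instFintypeIndex : ∀ j, Fintype (Index j)
  | 0 => inferInstanceAs (Fintype (Fin 2))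
  | j + 1 => letI := instFintypeIndex j; inferInstanceAs (Fintype (Index j × Fin 2))

instance instDecidableEqIndex : ∀ j, DecidableEq (Index j)
  | 0 => inferInstanceAs (DecidableEq (Fin 2))
  | j + 1 => letI := instDecidableEqIndex j; inferInstanceAs (DecidableEq (Index j × Fin 2))

def weight : ∀ j, Index j → ℕ
  | 0, i => (i : Fin 2).val
  | j + 1, s => weight j s.1 + s.2.val

def flipAll : ∀ j, Index j → Index j
  | 0, i => (i : Fin 2).rev
  | j + 1, s => (flipAll j s.1, s.2.rev)

lemma weight_le : ∀ j (s : Index j), weight j s ≤ j + 1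
  | 0, i => (i : Fin 2).is_le
  | j + 1, s => by have := weight_le j s.1; have := s.2.is_le; simp only [weight]; omega

lemma weight_flipAll : ∀ j (s : Index j), weight j (flipAll j s) = j + 1 - weight j s
  | 0, i => (by decide : ∀ t : Fin 2, t.rev.val = 0 + 1 - t.val) i
  | j + 1, s => by
    have := weight_flipAll j s.1
    have := weight_le j s.1
    have := Fin.val_rev s.2
    have := s.2.is_le
    simp only [weight, flipAll]
    omega

lemma flipAll_involutive : ∀ j, Function.Involutive (flipAll j)
  | 0 => Fin.rev_rev
  | j + 1 => fun s => Prod.ext (flipAll_involutive j s.1) s.2.rev_rev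

lemma flipAll_ne : ∀ j (s : Index j), flipAll j s ≠ s
  | 0, i => (by decide : ∀ t : Fin 2, t.rev ≠ t) i
  | j + 1, s => fun h => flipAll_ne j s.1 (congrArg Prod.fst h)

lemma card_filter_weight_eq : ∀ j k,
    (Finset.univ.filter fun s : Index j => weight j s = k).card = (j + 1).choose k
  | 0, k => by
    change (Finset.univ.filter fun i : Fin 2 => i.val = k).card = _
    rcases k with _ | _ | k
    · decide
    · decide
    · rw [Nat.choose_eq_zero_of_lt (by omega), Finset.card_eq_zero, Finset.filter_eq_empty_iff]
      intro i _
      omega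
  | j + 1, k => by
    have hsplit : (Finset.univ.filter fun s : Index (j + 1) => weight (j + 1) s = k).card =
        (Finset.univ.filter fun s : Index j => weight j s = k).card +
          (Finset.univ.filter fun s : Index j => weight j s + 1 = k).card := by
      simp only [Finset.card_filter]
      exact (Fintype.sum_prod_type _).trans
        (by simp [weight, Finset.sum_add_distrib, Fin.sum_univ_two])
    rw [hsplit, card_filter_weight_eq j k]
    rcases k with _ | k
    · simp
    · simp only [Nat.add_right_cancel_iff]
      rw [card_filter_weight_eq j k, Nat.choose_succ_succ' (j + 1) k, add_comm]

lemma card_filter_weight_eq_and_weight_eq (j k l : ℕ) :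
    (Finset.univ.filter fun p : Index j × Index j => weight j p.1 = k ∧ weight j p.2 = l).card =
      (j + 1).choose k * (j + 1).choose l := by
  rw [← Finset.univ_product_univ,
    Finset.filter_product (fun s => weight j s = k) (fun t => weight j t = l), Finset.card_product,
    card_filter_weight_eq, card_filter_weight_eq]

lemma card_filter_weight_eq_weight (j : ℕ) :
    (Finset.univ.filter fun p : Index j × Index j => weight j p.1 = weight j p.2).card =
      (2 * (j + 1)).choose (j + 1) := by
  rw [← Nat.sum_range_choose_sq, Finset.card_eq_sum_card_fiberwise (f := fun p => weight j p.1)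
    (t := Finset.range (j + 2)) fun p _ => Finset.mem_range_succ_iff.2 (weight_le j p.1)]
  refine Finset.sum_congr rfl fun k _ => ?_
  rw [Finset.filter_filter, sq, ← card_filter_weight_eq_and_weight_eq]
  congr 1
  ext p
  simp only [Finset.mem_filter, Finset.mem_univ, true_and]
  omega

def eigenvalue (α : ℂ) (j : ℕ) (s : Index j) : ℂ := α ^ ((j + 1 : ℤ) - 2 * weight j s)

lemma eigenvalue_flipAll (α : ℂ) (j : ℕ) (s : Index j) :
    eigenvalue α j (flipAll j s) = (eigenvalue α j s)⁻¹ := by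
  rw [eigenvalue, eigenvalue, weight_flipAll, ← _root_.zpow_neg]
  congr 1
  push_cast [weight_le j s]
  ring

lemma eigenvalue_eq_iff {α : ℂ} {j : ℕ} (hα : IsPrimitiveRoot α (2 * (j + 1)))
    (s t : Index j) :
    eigenvalue α j s = eigenvalue α j t ↔
      weight j s = weight j t ∨ weight j s = 0 ∧ weight j t = j + 1 ∨
        weight j s = j + 1 ∧ weight j t = 0 := by
  have hα0 : α ≠ 0 := hα.ne_zero (by omega)
  rw [eigenvalue, eigenvalue, ← div_eq_one_iff_eq (zpow_ne_zero _ hα0), ← zpow_sub₀ hα0,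
    hα.zpow_eq_one_iff_dvd]
  have := weight_le j s
  have := weight_le j t
  constructor
  · rintro ⟨m, hm⟩
    push_cast at hm
    have hj : (0 : ℤ) ≤ j := by positivity
    have : -1 ≤ m := by nlinarith
    have : m ≤ 1 := by nlinarith
    interval_cases m <;> omega
  · rintro (h | ⟨h1, h2⟩ | ⟨h1, h2⟩)
    exacts [⟨0, by omega⟩, ⟨1, by omega⟩, ⟨-1, by omega⟩]

def eigenPairs (α : ℂ) (j : ℕ) : Finset (Index j × Index j) :=
  Finset.univ.filter fun p => eigenvalue α j p.1 = eigenvalue α j p.2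

lemma prodMap_flipAll_mem_eigenPairs {α : ℂ} {j : ℕ} {p : Index j × Index j}
    (hp : p ∈ eigenPairs α j) : Prod.map (flipAll j) (flipAll j) p ∈ eigenPairs α j := by
  simpa [eigenPairs, eigenvalue_flipAll] using hp

lemma card_eigenPairs {α : ℂ} {j : ℕ} (hα : IsPrimitiveRoot α (2 * (j + 1))) :
    (eigenPairs α j).card = (2 * (j + 1)).choose (j + 1) + 2 := by
  simp only [eigenPairs, eigenvalue_eq_iff hα, Finset.filter_or]
  rw [Finset.card_union_of_disjoint, Finset.card_union_of_disjoint, card_filter_weight_eq_weight,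
    card_filter_weight_eq_and_weight_eq, card_filter_weight_eq_and_weight_eq, Nat.choose_zero_right,
    Nat.choose_self]
  · rw [Finset.disjoint_filter]
    intro p _
    omega
  · rw [Finset.disjoint_union_right, Finset.disjoint_filter, Finset.disjoint_filter]
    constructor <;> intro p _ <;> omega

def twistBasis : Module.Basis (Fin 2) ℂ V2 :=
  (Pi.basisFun ℂ (Fin 2)).isUnitSMul (w := ![1, Complex.I]) fun i => by
    fin_cases i <;> simp [Complex.I_ne_zero]

variable {G : Subgroup (GL (Fin 2) ℂ)} {g : G}

lemma stdRep_twistBasis_of_quarterTurn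
    (hg : ((g : GL (Fin 2) ℂ) : Matrix (Fin 2) (Fin 2) ℂ) = !![0, -1; 1, 0]) (i : Fin 2) :
    stdRep G g (twistBasis i) = (-Complex.I) • twistBasis i.rev := by
  ext k
  fin_cases i <;> fin_cases k <;>
    simp [stdRep, hg, twistBasis, Module.Basis.isUnitSMul_apply, Matrix.mulVec, dotProduct,
      Fin.sum_univ_two]

lemma stdRep_twistBasis_of_diagonal {α : ℂ}
    (hg : ((g : GL (Fin 2) ℂ) : Matrix (Fin 2) (Fin 2) ℂ) = !![α, 0; 0, α⁻¹]) (i : Fin 2) :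
    stdRep G g (twistBasis i) = α ^ (1 - 2 * (i.val : ℤ)) • twistBasis i := by
  ext k
  fin_cases i <;> fin_cases k <;>
    simp [stdRep, hg, twistBasis, Module.Basis.isUnitSMul_apply, Matrix.mulVec, dotProduct,
      Fin.sum_univ_two, mul_comm]

def basis : ∀ j, Module.Basis (Index j) ℂ (TPow j)
  | 0 => twistBasis
  | j + 1 => (basis j).tensorProduct twistBasis

lemma tPowRep_basis_of_quarterTurn
    (hg : ((g : GL (Fin 2) ℂ) : Matrix (Fin 2) (Fin 2) ℂ) = !![0, -1; 1, 0]) :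
    ∀ j s, TPowRep G j g (basis j s) = (-Complex.I) ^ (j + 1) • basis j (flipAll j s)
  | 0, i => by
    rw [zero_add, pow_one]
    exact stdRep_twistBasis_of_quarterTurn hg i
  | j + 1, s => by
    rw [pow_succ]
    exact Representation.tprod_apply_basis_tensorProduct (tPowRep_basis_of_quarterTurn hg j)
      (stdRep_twistBasis_of_quarterTurn hg) s

lemma tPowRep_basis_of_diagonal {α : ℂ} (hα : α ≠ 0)
    (hg : ((g : GL (Fin 2) ℂ) : Matrix (Fin 2) (Fin 2) ℂ) = !![α, 0; 0, α⁻¹]) :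
    ∀ j s, TPowRep G j g (basis j s) = eigenvalue α j s • basis j s
  | 0, i => by
    have h : eigenvalue α 0 i = α ^ (1 - 2 * ((i : Fin 2).val : ℤ)) := by
      simp [eigenvalue, weight]
    rw [h]
    exact stdRep_twistBasis_of_diagonal hg i
  | j + 1, s => by
    refine (Representation.tprod_apply_basis_tensorProduct (tPowRep_basis_of_diagonal hα hg j)
      (stdRep_twistBasis_of_diagonal hg) s).trans ?_
    rw [eigenvalue, eigenvalue, ← zpow_add₀ hα]
    congr 2
    simp only [weight]
    push_cast
    ring

variable {X A : GL (Fin 2) ℂ} {α : ℂ}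

lemma mem_equivEnd_iff (hX : (X : Matrix (Fin 2) (Fin 2) ℂ) = !![0, -1; 1, 0]) (hα : α ≠ 0)
    (hA : (A : Matrix (Fin 2) (Fin 2) ℂ) = !![α, 0; 0, α⁻¹]) (j : ℕ)
    (f : Module.End ℂ (TPow j)) :
    f ∈ equivEnd (TPowRep (Subgroup.closure {X, A}) j) ↔
      ((basis j).linearMap (basis j)).equivFun f ∈
        invariantsOn ℂ (Prod.map (flipAll j) (flipAll j)) (eigenPairs α j) := by
  set M := LinearMap.toMatrix (basis j) (basis j) f
  have hcommX (g : Subgroup.closure {X, A}) (hg : (g : GL (Fin 2) ℂ) = X) :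
      Commute f (TPowRep _ j g) ↔ ∀ s t, M (flipAll j s) (flipAll j t) = M s t := by
    rw [← hg] at hX
    exact commute_iff_of_apply_basis_eq_smul_involutive (basis j)
      (pow_ne_zero _ (neg_ne_zero.2 Complex.I_ne_zero)) (flipAll_involutive j)
      (tPowRep_basis_of_quarterTurn hX j) f
  have hcommA (g : Subgroup.closure {X, A}) (hg : (g : GL (Fin 2) ℂ) = A) :
      Commute f (TPowRep _ j g) ↔
        ∀ s t, eigenvalue α j s ≠ eigenvalue α j t → M s t = 0 := by
    rw [← hg] at hA
    exact commute_iff_of_apply_basis_eq_smul (basis j) (tPowRep_basis_of_diagonal hα hA j) f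
  rw [mem_equivEnd_closure_iff]
  simp only [Set.mem_insert_iff, Set.mem_singleton_iff]
  calc _ ↔ (∀ s t, M (flipAll j s) (flipAll j t) = M s t) ∧
        ∀ s t, eigenvalue α j s ≠ eigenvalue α j t → M s t = 0 :=
      ⟨fun h => ⟨(hcommX _ rfl).1 (h ⟨X, Subgroup.subset_closure (by simp)⟩ (Or.inl rfl)),
          (hcommA _ rfl).1 (h ⟨A, Subgroup.subset_closure (by simp)⟩ (Or.inr rfl))⟩,
        fun h g hg => hg.elim (fun hgX => (hcommX g hgX).2 h.1) fun hgA => (hcommA g hgA).2 h.2⟩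
    _ ↔ _ := by
      simp only [mem_invariantsOn, Module.Basis.equivFun_apply, Module.Basis.linearMap_repr_apply,
        eigenPairs, Finset.mem_filter, Finset.mem_univ, true_and, Prod.forall, Prod.map_apply, M]
      exact and_comm

lemma two_mul_finrank_equivEnd (hX : (X : Matrix (Fin 2) (Fin 2) ℂ) = !![0, -1; 1, 0])
    (hα : α ≠ 0) (hA : (A : Matrix (Fin 2) (Fin 2) ℂ) = !![α, 0; 0, α⁻¹]) (j : ℕ) :
    2 * Module.finrank ℂ (equivEnd (TPowRep (Subgroup.closure {X, A}) j)) =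
      (eigenPairs α j).card := by
  let e := ((basis j).linearMap (basis j)).equivFun
  have hmap : (equivEnd (TPowRep (Subgroup.closure {X, A}) j)).map (e : _ →ₗ[ℂ] _) =
      invariantsOn ℂ (Prod.map (flipAll j) (flipAll j)) (eigenPairs α j) := by
    ext v
    rw [Submodule.mem_map_equiv, mem_equivEnd_iff hX hα hA, LinearEquiv.apply_symm_apply]
  rw [(e.ofSubmodules _ _ hmap).finrank_eq]
  exact two_mul_finrank_invariantsOn ℂ
    ((flipAll_involutive j).prodMap (flipAll_involutive j))
    (fun p h => flipAll_ne j p.1 (congrArg Prod.fst h)) fun _ => prodMap_flipAll_mem_eigenPairs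

end TPow

/-- For every integer `n ≥ 1`, the endomorphism algebra of the `n`-th tensor power of the
standard representation of the dicyclic group of degree `n` satisfies
`dim_ℂ End_{Dic_n}(V^{⊗n}) = (1/2)·binomial(2n,n) + 1`. -/
theorem dim_equivEnd_tensorPower_dicyclic_eq
    (n : ℕ) (hn : 1 ≤ n) (X A : GL (Fin 2) ℂ)
    (hX : (X : Matrix (Fin 2) (Fin 2) ℂ) = !![0, -1; 1, 0])
    (hA : (A : Matrix (Fin 2) (Fin 2) ℂ) =
      !![Complex.exp (Real.pi * Complex.I / n), 0;
         0, Complex.exp (-(Real.pi * Complex.I / n))])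
    (G : Subgroup (GL (Fin 2) ℂ)) (hG : G = Subgroup.closure {X, A}) :
    (Module.finrank ℂ (equivEnd (TPowRep G (n - 1))) : ℚ) =
      (Nat.choose (2 * n) n : ℚ) / 2 + 1 := by
  obtain ⟨j, rfl⟩ : ∃ j, n = j + 1 := ⟨n - 1, by omega⟩
  subst hG
  rw [Complex.exp_neg] at hA
  have key := TPow.two_mul_finrank_equivEnd hX (Complex.exp_ne_zero _) hA j
  rw [TPow.card_eigenPairs (isPrimitiveRoot_exp_pi_mul_I_div (j + 1) j.succ_ne_zero)] at key
  have key' := congrArg (Nat.cast : ℕ → ℚ) key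
  push_cast at key'
  rw [Nat.add_sub_cancel]
  linarith
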